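/- (Detection guarantee under the Theorem 1 conditions.) Let d ≥ 1, K ≥ 2, let f be a measurable score function on ℝ^d with K classes, μ a probability measure on ℝ^d, t ∈ ℝ^d, and y_t a class. Assume: (i) for μ-almost every η, y_t is the strict argmax of f at t + η; and (ii) there exist distinct classes z1 ≠ z2 and measurable sets A1, A2 with μ(A1) > 0 and μ(A2) > 0 such that for every x ∈ A_i, z_i is the strict argmax of f at x. Let g : ℝ → ℝ be any strictly monotone increasing function, let n ≥ 1, and let x̂_1, …, x̂_n ∈ ℝ^d be benign calibration inputs with δ_i := δ(x̂_i) computed under noise μ'_{x̂_i}. Set the threshold τ := max_{1 ≤ i ≤ n} g(δ_i). Then g(δ_i) ≤ τ for every i (no calibration input is rejected), τ < g(1), and for every x̂ ∈ ℝ^d the Trojan input x̂ + t satisfies g(δ(x̂ + t)) = g(1) > τ, so the rule "flag the input when g(δ) > τ" flags every Trojan input and no calibration benign input. -/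

import Mathlib

open MeasureTheory

/-- Class `k` is the strict argmax of the score function `f` at input `x`. -/
def IsStrictArgmax {d K : ℕ} (f : Fin K → (Fin d → ℝ) → ℝ) (x : Fin d → ℝ) (k : Fin K) : Prop :=
  ∀ j : Fin K, j ≠ k → f j x < f k x

/-- Prediction probability of class `k` for input `x` under noise distribution `ν`. -/
noncomputable def predProb {d K : ℕ} (ν : Measure (Fin d → ℝ))
    (f : Fin K → (Fin d → ℝ) → ℝ) (x : Fin d → ℝ) (k : Fin K) : ℝ :=
  (ν {η | IsStrictArgmax f (x + η) k}).toReal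

lemma finUnivNE {K : ℕ} (hK : 2 ≤ K) : (Finset.univ : Finset (Fin K)).Nonempty :=
  ⟨⟨0, by omega⟩, Finset.mem_univ _⟩

lemma finEraseNE {K : ℕ} (hK : 2 ≤ K) (i : Fin K) :
    ((Finset.univ : Finset (Fin K)).erase i).Nonempty := by
  apply Finset.card_pos.mp
  rw [Finset.card_erase_of_mem (Finset.mem_univ i), Finset.card_univ, Fintype.card_fin]
  omega

/-- `p1`: the largest of the `K` values `q k`. -/
noncomputable def topVal {K : ℕ} (hK : 2 ≤ K) (q : Fin K → ℝ) : ℝ :=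
  Finset.univ.sup' (finUnivNE hK) q

/-- An index attaining the maximum of `q`. -/
noncomputable def argmaxIdx {K : ℕ} (hK : 2 ≤ K) (q : Fin K → ℝ) : Fin K :=
  Classical.choose (Finset.exists_mem_eq_sup' (finUnivNE hK) q)

/-- `p2`: the second-largest value of `q`, i.e. the maximum of the remaining
values after removing one index attaining the maximum. -/
noncomputable def sndVal {K : ℕ} (hK : 2 ≤ K) (q : Fin K → ℝ) : ℝ :=
  (Finset.univ.erase (argmaxIdx hK q)).sup' (finEraseNE hK _) q

/-- `δ(x) = p1 - p2` computed from the prediction probabilities of input `x`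
under noise distribution `ν`. -/
noncomputable def deltaOf {d K : ℕ} (hK : 2 ≤ K) (ν : Measure (Fin d → ℝ))
    (f : Fin K → (Fin d → ℝ) → ℝ) (x : Fin d → ℝ) : ℝ :=
  topVal hK (predProb ν f x) - sndVal hK (predProb ν f x)


lemma measSet {d K : ℕ} (f : Fin K → (Fin d → ℝ) → ℝ) (hmeas : ∀ k, Measurable (f k))
    (x : Fin d → ℝ) (k : Fin K) :
    MeasurableSet {η : Fin d → ℝ | IsStrictArgmax f (x + η) k} := by
  have h : {η : Fin d → ℝ | IsStrictArgmax f (x + η) k}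
      = ⋂ j : Fin K, {η | j ≠ k → f j (x + η) < f k (x + η)} := by
    ext η; simp [IsStrictArgmax, Set.mem_iInter]
  rw [h]
  refine MeasurableSet.iInter fun j => ?_
  by_cases hj : j = k
  · have : {η : Fin d → ℝ | j ≠ k → f j (x + η) < f k (x + η)} = Set.univ := by
      ext η; simp [hj]
    rw [this]; exact MeasurableSet.univ
  · have : {η : Fin d → ℝ | j ≠ k → f j (x + η) < f k (x + η)}
        = {η | f j (x + η) < f k (x + η)} := by ext η; simp [hj]
    rw [this]
    exact measurableSet_lt ((hmeas j).comp (measurable_const_add x))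
      ((hmeas k).comp (measurable_const_add x))

lemma predProb_map {d K : ℕ} (f : Fin K → (Fin d → ℝ) → ℝ) (hmeas : ∀ k, Measurable (f k))
    (μ : Measure (Fin d → ℝ)) (xh x : Fin d → ℝ) (k : Fin K) :
    predProb (μ.map (fun η => η - xh)) f x k
      = (μ {η | IsStrictArgmax f (x + (η - xh)) k}).toReal := by
  unfold predProb
  rw [Measure.map_apply (show Measurable fun η : Fin d → ℝ => η - xh from
    measurable_id.sub measurable_const) (measSet f hmeas x k)]
  rfl

lemma argmaxIdx_spec {K : ℕ} (hK : 2 ≤ K) (q : Fin K → ℝ) :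
    topVal hK q = q (argmaxIdx hK q) :=
  (Classical.choose_spec (Finset.exists_mem_eq_sup' (finUnivNE hK) q)).2

lemma delta_indicator {K : ℕ} (hK : 2 ≤ K) (yt : Fin K) (q : Fin K → ℝ)
    (hq : ∀ k, q k = if k = yt then 1 else 0) :
    topVal hK q = 1 ∧ sndVal hK q = 0 := by
  have htop : topVal hK q = 1 := by
    apply le_antisymm
    · apply Finset.sup'_le; intro j _; rw [hq j]; split <;> norm_num
    · have h := Finset.le_sup' q (Finset.mem_univ yt)
      rw [hq yt] at h; rw [if_pos rfl] at h; exact h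
  have ha : argmaxIdx hK q = yt := by
    by_contra hne
    have := argmaxIdx_spec hK q
    rw [htop, hq (argmaxIdx hK q), if_neg hne] at this
    norm_num at this
  refine ⟨htop, le_antisymm ?_ ?_⟩
  · apply Finset.sup'_le; intro j hj
    rw [Finset.mem_erase, ha] at hj
    rw [hq j, if_neg hj.1]
  · obtain ⟨j, hj⟩ := finEraseNE hK (argmaxIdx hK q)
    have h := Finset.le_sup' q hj
    rw [Finset.mem_erase, ha] at hj
    rw [hq j, if_neg hj.1] at h
    exact h

lemma delta_lt_one {K : ℕ} (hK : 2 ≤ K) (q : Fin K → ℝ) (z1 z2 : Fin K) (hz : z1 ≠ z2)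
    (h1 : 0 < q z1) (h2 : 0 < q z2) (hle : ∀ k, q k ≤ 1) :
    topVal hK q - sndVal hK q < 1 := by
  have htop : topVal hK q ≤ 1 := Finset.sup'_le _ _ fun j _ => hle j
  have hsnd : 0 < sndVal hK q := by
    rcases ne_or_eq z1 (argmaxIdx hK q) with h | h
    · have hm : z1 ∈ Finset.univ.erase (argmaxIdx hK q) :=
        Finset.mem_erase.2 ⟨h, Finset.mem_univ _⟩
      exact lt_of_lt_of_le h1 (Finset.le_sup' q hm)
    · have hm : z2 ∈ Finset.univ.erase (argmaxIdx hK q) :=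
        Finset.mem_erase.2 ⟨by rw [← h]; exact hz.symm, Finset.mem_univ _⟩
      exact lt_of_lt_of_le h2 (Finset.le_sup' q hm)
  linarith

/-- Detection guarantee under the Theorem-1 conditions. With a
strictly increasing transform `g` and threshold `τ` set to the maximum of
`g(δ_i)` over `n` benign calibration inputs, no calibration input is rejected,
`τ < g(1)`, and every Trojan input `x̂ + t` satisfies `g(δ(x̂ + t)) = g(1) > τ`,
so the rule "flag when `g(δ) > τ`" flags every Trojan input and no calibration
benign input. -/
theorem detection_guarantee {d K : ℕ} (hd : 1 ≤ d) (hK : 2 ≤ K)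
    (f : Fin K → (Fin d → ℝ) → ℝ)
    (hmeas : ∀ k, Measurable (f k))
    (hnn : ∀ (x : Fin d → ℝ) (k : Fin K), 0 ≤ f k x)
    (hsum : ∀ x : Fin d → ℝ, ∑ k, f k x = 1)
    (μ : Measure (Fin d → ℝ)) [IsProbabilityMeasure μ]
    (t : Fin d → ℝ) (yt : Fin K)
    (hatt : ∀ᵐ η ∂μ, IsStrictArgmax f (t + η) yt)
    (z1 z2 : Fin K) (hz : z1 ≠ z2)
    (A1 A2 : Set (Fin d → ℝ)) (hA1meas : MeasurableSet A1) (hA2meas : MeasurableSet A2)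
    (hA1pos : 0 < μ A1) (hA2pos : 0 < μ A2)
    (hA1 : ∀ x ∈ A1, IsStrictArgmax f x z1)
    (hA2 : ∀ x ∈ A2, IsStrictArgmax f x z2)
    (g : ℝ → ℝ) (hg : StrictMono g)
    (n : ℕ) (hn : 1 ≤ n) (xhat : Fin n → (Fin d → ℝ))
    (δ : Fin n → ℝ)
    (hδ : ∀ i, δ i = deltaOf hK (μ.map (fun η => η - xhat i)) f (xhat i))
    (τ : ℝ)
    (hτ : τ = Finset.univ.sup' (⟨⟨0, by omega⟩, Finset.mem_univ _⟩ :
      (Finset.univ : Finset (Fin n)).Nonempty) (fun i => g (δ i))) :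
    (∀ i, g (δ i) ≤ τ) ∧
    τ < g 1 ∧
    (∀ xh : Fin d → ℝ,
      g (deltaOf hK (μ.map (fun η => η - xh)) f (xh + t)) = g 1 ∧
      τ < g (deltaOf hK (μ.map (fun η => η - xh)) f (xh + t))) := by
  have hsubmeas : Measurable (fun η : Fin d → ℝ => η - t) := measurable_id.sub measurable_const
  -- a.e. set for trojan
  have hone : μ {η | IsStrictArgmax f (t + η) yt} = 1 := by
    have h0 : μ {η | IsStrictArgmax f (t + η) yt}ᶜ = 0 := by
      rw [Set.compl_setOf]; exact ae_iff.mp hatt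
    exact (prob_compl_eq_zero_iff (measSet f hmeas t yt)).mp h0
  have hzero : ∀ k : Fin K, k ≠ yt → μ {η | IsStrictArgmax f (t + η) k} = 0 := by
    intro k hk
    have hsub : {η | IsStrictArgmax f (t + η) k} ⊆ {η | ¬ IsStrictArgmax f (t + η) yt} := by
      intro η hη hη'
      exact lt_asymm (hη yt (Ne.symm hk)) (hη' k hk)
    exact measure_mono_null hsub (ae_iff.mp hatt)
  -- trojan delta = 1
  have htroj : ∀ xh : Fin d → ℝ,
      deltaOf hK (μ.map (fun η => η - xh)) f (xh + t) = 1 := by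
    intro xh
    have hq : ∀ k, predProb (μ.map (fun η => η - xh)) f (xh + t) k
        = if k = yt then 1 else 0 := by
      intro k
      rw [predProb_map f hmeas μ xh (xh + t) k]
      have hset : {η : Fin d → ℝ | IsStrictArgmax f (xh + t + (η - xh)) k}
          = {η | IsStrictArgmax f (t + η) k} := by
        ext η
        have : xh + t + (η - xh) = t + η := by abel
        rw [Set.mem_setOf_eq, Set.mem_setOf_eq, this]
      rw [hset]
      by_cases hk : k = yt
      · rw [hk, hone, if_pos rfl]; norm_num
      · rw [hzero k hk, if_neg hk]; norm_num
    obtain ⟨ht1, ht2⟩ := delta_indicator hK yt _ hq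
    unfold deltaOf
    rw [ht1, ht2]; ring
  -- benign delta < 1
  have hben : ∀ i, δ i < 1 := by
    intro i
    rw [hδ i]
    unfold deltaOf
    set ν := μ.map (fun η => η - xhat i) with hν
    have hqk : ∀ k, predProb ν f (xhat i) k
        = (μ {η | IsStrictArgmax f η k}).toReal := by
      intro k
      rw [hν, predProb_map f hmeas μ (xhat i) (xhat i) k]
      congr 1
      apply congrArg
      ext η
      have : xhat i + (η - xhat i) = η := by abel
      rw [Set.mem_setOf_eq, Set.mem_setOf_eq, this]
    have hpos : ∀ (z : Fin K) (A : Set (Fin d → ℝ)), 0 < μ A →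
        (∀ x ∈ A, IsStrictArgmax f x z) → 0 < predProb ν f (xhat i) z := by
      intro z A hApos hA
      rw [hqk z]
      apply ENNReal.toReal_pos
      · exact (lt_of_lt_of_le hApos (measure_mono hA)).ne'
      · exact measure_ne_top μ _
    have hle : ∀ k, predProb ν f (xhat i) k ≤ 1 := by
      intro k
      rw [hqk k]
      have := measure_mono (μ := μ) (Set.subset_univ {η | IsStrictArgmax f η k})
      calc (μ {η | IsStrictArgmax f η k}).toReal
          ≤ (μ Set.univ).toReal := ENNReal.toReal_mono (measure_ne_top μ _) this
        _ = 1 := by rw [measure_univ]; norm_num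
    exact delta_lt_one hK _ z1 z2 hz (hpos z1 A1 hA1pos hA1) (hpos z2 A2 hA2pos hA2) hle
  have hτlt : τ < g 1 := by
    rw [hτ]
    refine (Finset.sup'_lt_iff _).2 ?_
    intro i _
    exact hg (hben i)
  refine ⟨fun i => ?_, hτlt, fun xh => ?_⟩
  · rw [hτ]
    exact Finset.le_sup' (fun i => g (δ i)) (Finset.mem_univ i)
  · rw [htroj xh]
    exact ⟨rfl, hτlt⟩
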